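/- Let K₁ and K₂ be Knaster continua, and let g, f : K₁ → K₂ be two naturally induced maps such that their compositions with the projection of K₂ onto the 0-th coordinate agree: π″₀ ∘ g = π″₀ ∘ f. Then g = f. -/

import Mathlib

open Set

noncomputable def vmap (t : ℝ) : ℝ :=
  if Even ⌊t⌋ then t - ⌊t⌋ else ⌊t⌋ + 1 - t

noncomputable def gmap (n : ℕ) (t : ℝ) : ℝ := vmap (n * t)

def Knaster (n : ℕ → ℕ) : Set (ℕ → ℝ) :=
  {x | (∀ j, x j ∈ Icc (0:ℝ) 1) ∧ ∀ j, x j = gmap (n j) (x (j + 1))}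

/-!
The `k`-th coordinate of a naturally induced map is `x ↦ g_{i_k}(x_{j_k})`, and by the bonding
relations of `K₂` its `0`-th coordinate is `x ↦ g_{m_0⋯m_{k-1} i_k}(x_{j_k})`. Since
`g_a ∘ g_b = g_{ab}`, every map `x ↦ g_a(x_j)` with `j ≤ J` factors as `x ↦ g_D(x_J)`, and the
projection `x ↦ x_J` is onto `[0, 1]`. On `[0, 1]` the map `g_D` determines `D` (evaluate at `1/D`),
so equality of the `0`-th coordinates of the two maps gives equality of degrees, and cancelling
`m_0⋯m_{k-1}` gives equality of the `k`-th coordinates.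
-/

lemma vmap_mem (t : ℝ) : vmap t ∈ Icc (0:ℝ) 1 := by
  unfold vmap
  have := Int.floor_le t
  have := Int.lt_floor_add_one t
  split <;> constructor <;> linarith

lemma vmap_of_mem {t : ℝ} (ht : t ∈ Icc (0:ℝ) 1) : vmap t = t := by
  rcases ht.2.lt_or_eq with ht1 | rfl
  · simp [vmap, Int.floor_eq_zero_iff.mpr ⟨ht.1, ht1⟩]
  · norm_num [vmap]

lemma vmap_add_intCast_of_even (t : ℝ) {m : ℤ} (hm : Even m) : vmap (t + m) = vmap t := by
  have hpar : Even (⌊t⌋ + m) ↔ Even ⌊t⌋ := by simp [Int.even_add, hm]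
  unfold vmap
  rw [Int.floor_add_intCast]
  split_ifs <;> first | tauto | (push_cast; ring)

lemma vmap_neg (t : ℝ) : vmap (-t) = vmap t := by
  rcases eq_or_ne (Int.fract t) 0 with hfr | hfr
  · obtain ⟨m, rfl⟩ : ∃ m : ℤ, (m : ℝ) = t := Int.fract_eq_zero_iff.mp hfr
    unfold vmap
    rw [← Int.cast_neg, Int.floor_intCast, Int.floor_intCast]
    split_ifs <;> simp_all [even_neg]
  · have hceil : ⌈t⌉ = ⌊t⌋ + 1 :=
      (Int.ceil_eq_floor_add_one_iff_notMem t).mpr (Int.fract_ne_zero_iff.mp hfr)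
    have hpar : Even (-(⌊t⌋ + 1)) ↔ ¬Even ⌊t⌋ := by rw [even_neg, Int.even_add_one]
    unfold vmap
    rw [Int.floor_neg, hceil]
    split_ifs <;> first | tauto | (push_cast; ring)

lemma vmap_natCast_mul_vmap (n : ℕ) (s : ℝ) : vmap (n * vmap s) = vmap (n * s) := by
  by_cases he : Even ⌊s⌋
  · have : (n : ℝ) * vmap s = n * s + ((-(n * ⌊s⌋) : ℤ) : ℝ) := by
      rw [vmap, if_pos he]; push_cast; ring
    rw [this, vmap_add_intCast_of_even _ (he.mul_left _).neg]
  · have : (n : ℝ) * vmap s = -(n * s) + ((n * (⌊s⌋ + 1) : ℤ) : ℝ) := by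
      rw [vmap, if_neg he]; push_cast; ring
    rw [this, vmap_add_intCast_of_even _ ((Int.even_add_one.mpr he).mul_left _), vmap_neg]

lemma gmap_mem (n : ℕ) (t : ℝ) : gmap n t ∈ Icc (0:ℝ) 1 := vmap_mem _

lemma gmap_one_of_mem {t : ℝ} (ht : t ∈ Icc (0:ℝ) 1) : gmap 1 t = t := by
  rw [gmap, Nat.cast_one, one_mul, vmap_of_mem ht]

lemma gmap_gmap (a b : ℕ) (t : ℝ) : gmap a (gmap b t) = gmap (a * b) t := by
  rw [gmap, gmap, vmap_natCast_mul_vmap, gmap, Nat.cast_mul, mul_assoc]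

lemma gmap_inv_natCast_le {a b : ℕ} (hab : a ≤ b) (hb : b ≠ 0) :
    gmap a (b : ℝ)⁻¹ = a / b := by
  have hb' : (0 : ℝ) < b := by positivity
  rw [gmap, ← div_eq_mul_inv]
  exact vmap_of_mem ⟨by positivity, (div_le_one hb').mpr (by exact_mod_cast hab)⟩

lemma eq_of_eqOn_gmap {a b : ℕ} (h : EqOn (gmap a) (gmap b) (Icc 0 1)) : a = b := by
  wlog hab : a < b generalizing a b
  · rcases (not_lt.mp hab).eq_or_lt with rfl | hba
    · rfl
    · exact (this h.symm hba).symm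
  have hb : b ≠ 0 := by omega
  have hb' : (0 : ℝ) < b := by positivity
  have key := h ⟨by positivity, inv_le_one_of_one_le₀ (by exact_mod_cast Nat.one_le_iff_ne_zero.mpr hb)⟩
  rw [gmap_inv_natCast_le hab.le hb, gmap_inv_natCast_le le_rfl hb, div_self hb'.ne'] at key
  exact absurd key ((div_lt_one hb').mpr (by exact_mod_cast hab)).ne

namespace Knaster

variable {n : ℕ → ℕ} {x : ℕ → ℝ}

lemma apply_eq_gmap_prod (hx : x ∈ Knaster n) {j J : ℕ} (hjJ : j ≤ J) :
    x j = gmap (∏ i ∈ Finset.Ico j J, n i) (x J) := by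
  induction J, hjJ using Nat.le_induction with
  | base => rw [Finset.Ico_self, Finset.prod_empty, gmap_one_of_mem (hx.1 j)]
  | succ J hJ ih => rw [ih, Finset.prod_Ico_succ_top hJ, ← gmap_gmap, ← hx.2 J]

lemma gmap_apply_eq_gmap_mul_prod (hx : x ∈ Knaster n) (a : ℕ) {j J : ℕ} (hjJ : j ≤ J) :
    gmap a (x j) = gmap (a * ∏ i ∈ Finset.Ico j J, n i) (x J) := by
  rw [apply_eq_gmap_prod hx hjJ, gmap_gmap]

lemma exists_apply_eq (hn : ∀ j, n j ≠ 0) (J : ℕ) {t : ℝ} (ht : t ∈ Icc (0:ℝ) 1) :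
    ∃ x ∈ Knaster n, x J = t := by
  set P : ℕ → ℝ := fun j => ∏ i ∈ Finset.range j, (n i : ℝ)
  have hP : ∀ j, P j ≠ 0 := fun j => Finset.prod_ne_zero_iff.mpr fun i _ => by exact_mod_cast hn i
  -- the image of `t * P J` under the map `r ↦ (vmap (r / P j))_j` from `ℝ` into the continuum
  refine ⟨fun j => vmap (t * P J / P j), ⟨fun j => vmap_mem _, fun j => ?_⟩, ?_⟩
  · have : (n j : ℝ) * (t * P J / P (j + 1)) = t * P J / P j := by
      simp only [P, Finset.prod_range_succ]
      field_simp [hP j, (by exact_mod_cast hn j : (n j : ℝ) ≠ 0)]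
    rw [gmap, vmap_natCast_mul_vmap, this]
  · simp only [mul_div_cancel_right₀ _ (hP J), vmap_of_mem ht]

lemma gmap_apply_eq_gmap_apply_iff (hn : ∀ j, n j ≠ 0) {a b j j' J : ℕ} (hj : j ≤ J) (hj' : j' ≤ J) :
    (∀ x ∈ Knaster n, gmap a (x j) = gmap b (x j')) ↔
      a * ∏ i ∈ Finset.Ico j J, n i = b * ∏ i ∈ Finset.Ico j' J, n i := by
  refine ⟨fun h => eq_of_eqOn_gmap fun t ht => ?_, fun h x hx => ?_⟩
  · obtain ⟨x, hx, rfl⟩ := exists_apply_eq hn J ht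
    rw [← gmap_apply_eq_gmap_mul_prod hx a hj, ← gmap_apply_eq_gmap_mul_prod hx b hj', h x hx]
  · rw [gmap_apply_eq_gmap_mul_prod hx a hj, gmap_apply_eq_gmap_mul_prod hx b hj', h]

end Knaster

theorem naturally_induced_unique_general (nseq mseq : ℕ → ℕ)
    (hn : ∀ j, 1 < nseq j) (hm : ∀ j, 1 < mseq j)
    (iseq jseq iseq' jseq' : ℕ → ℕ)
    (hind : ∀ x ∈ Knaster nseq,
      (fun k => gmap (iseq k) (x (jseq k))) ∈ Knaster mseq)
    (hind' : ∀ x ∈ Knaster nseq,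
      (fun k => gmap (iseq' k) (x (jseq' k))) ∈ Knaster mseq)
    (h0 : ∀ x ∈ Knaster nseq, gmap (iseq 0) (x (jseq 0)) = gmap (iseq' 0) (x (jseq' 0))) :
    ∀ x ∈ Knaster nseq, ∀ k, gmap (iseq k) (x (jseq k)) = gmap (iseq' k) (x (jseq' k)) := by
  intro x hx k
  have hn0 : ∀ j, nseq j ≠ 0 := fun j => (zero_lt_one.trans (hn j)).ne'
  set M := ∏ i ∈ Finset.Ico 0 k, mseq i
  have hM : 0 < M := Finset.prod_pos fun i _ => zero_lt_one.trans (hm i)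
  have h0k : ∀ z ∈ Knaster nseq,
      gmap (M * iseq k) (z (jseq k)) = gmap (M * iseq' k) (z (jseq' k)) := fun z hz =>
    calc gmap (M * iseq k) (z (jseq k))
        = gmap (iseq 0) (z (jseq 0)) := by
          rw [← gmap_gmap]; exact (Knaster.apply_eq_gmap_prod (hind z hz) k.zero_le).symm
      _ = gmap (iseq' 0) (z (jseq' 0)) := h0 z hz
      _ = gmap (M * iseq' k) (z (jseq' k)) := by
          rw [← gmap_gmap]; exact Knaster.apply_eq_gmap_prod (hind' z hz) k.zero_le
  have hJ := le_max_left (jseq k) (jseq' k)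
  have hJ' := le_max_right (jseq k) (jseq' k)
  have hdeg := (Knaster.gmap_apply_eq_gmap_apply_iff hn0 hJ hJ').mp h0k
  rw [mul_assoc, mul_assoc] at hdeg
  exact (Knaster.gmap_apply_eq_gmap_apply_iff hn0 hJ hJ').mpr
    (Nat.eq_of_mul_eq_mul_left hM hdeg) x hx

theorem naturally_induced_unique (nseq mseq : ℕ → ℕ)
    (hn : ∀ j, 1 < nseq j) (hm : ∀ j, 1 < mseq j)
    (iseq jseq iseq' jseq' : ℕ → ℕ)
    (hi : ∀ k, 0 < iseq k) (hj : StrictMono jseq)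
    (hi' : ∀ k, 0 < iseq' k) (hj' : StrictMono jseq')
    (hind : ∀ x ∈ Knaster nseq,
      (fun k => gmap (iseq k) (x (jseq k))) ∈ Knaster mseq)
    (hind' : ∀ x ∈ Knaster nseq,
      (fun k => gmap (iseq' k) (x (jseq' k))) ∈ Knaster mseq)
    (h0 : ∀ x ∈ Knaster nseq, gmap (iseq 0) (x (jseq 0)) = gmap (iseq' 0) (x (jseq' 0))) :
    ∀ x ∈ Knaster nseq, ∀ k, gmap (iseq k) (x (jseq k)) = gmap (iseq' k) (x (jseq' k)) :=
  naturally_induced_unique_general nseq mseq hn hm iseq jseq iseq' jseq' hind hind' h0
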